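/- arXiv:2507.21497 — 2 statements merged into one kernel-verified Lean document; each statement's English description precedes it below -/
import Mathlib

section
/- Pathwise adjoint identity for the Euler–Maruyama discretization: in the Euler setting below, ⟨∇Φ(x_N), v_N⟩ + (Φ(x_N) − Φ^avg) ∑_{n=0}^{N−1} (α_n / σ(x_n)) ⟨ΔB_n, v_n⟩ = ⟨ν_0, v_0⟩ + ∑_{k=0}^{N−1} ⟨ν_{k+1}, δF_k Δt + δσ_k ΔB_k⟩. -/
open Matrix

/-- The gradient vector of a scalar function on `ℝ^M`, in the standard basis. -/
noncomputable def gradVec {M : ℕ} (g : (Fin M → ℝ) → ℝ) (x : Fin M → ℝ) : Fin M → ℝ :=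
  fun i => fderiv ℝ g x (Pi.single i 1)

/-- The Jacobian matrix of a map `ℝ^M → ℝ^M`, in the standard basis. -/
noncomputable def jac {M : ℕ} (F : (Fin M → ℝ) → (Fin M → ℝ)) (x : Fin M → ℝ) :
    Matrix (Fin M) (Fin M) ℝ :=
  Matrix.of fun i j => fderiv ℝ F x (Pi.single j 1) i

/-!
Both the damped tangent process and the adjoint process are driven by the same one-step matrix
`A_n = (1 - α_n Δt) I + Δt ∇F(x_n) + ΔB_n ∇σ(x_n)ᵀ`: the tangent process by `A_n` plus the source
`δF_n Δt + δσ_n ΔB_n`, the adjoint process by `A_nᵀ` plus the source `(Φ(x_N) - Φ^avg)(α_n/σ(x_n)) ΔB_n`.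
Since `⟨ν, A v⟩ = ⟨Aᵀ ν, v⟩`, the increment of `⟨ν_n, v_n⟩` only sees the two sources, and summing
over `n` telescopes to the identity.
-/

section DiscreteAdjoint

variable {R m : Type*} [CommRing R] [Fintype m]

theorem dotProduct_eq_add_sum_of_adjoint_recursions (A : ℕ → Matrix m m R)
    (b c v ν : ℕ → m → R) (N : ℕ)
    (hv : ∀ n < N, v (n + 1) = A n *ᵥ v n + b n)
    (hν : ∀ n < N, ν n = (A n)ᵀ *ᵥ ν (n + 1) + c n) :
    ν N ⬝ᵥ v N = ν 0 ⬝ᵥ v 0 + ∑ n ∈ Finset.range N, (ν (n + 1) ⬝ᵥ b n - c n ⬝ᵥ v n) := by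
  have increment : ∀ n < N,
      ν (n + 1) ⬝ᵥ v (n + 1) - ν n ⬝ᵥ v n = ν (n + 1) ⬝ᵥ b n - c n ⬝ᵥ v n := by
    intro n hn
    rw [hv n hn, hν n hn, dotProduct_add, add_dotProduct, dotProduct_mulVec, mulVec_transpose]
    ring
  rw [← Finset.sum_congr rfl fun n hn => increment n (Finset.mem_range.mp hn),
    Finset.sum_range_sub (fun n => ν n ⬝ᵥ v n)]
  ring

end DiscreteAdjoint

section EulerStep

variable {R m : Type*} [CommRing R] [Fintype m] [DecidableEq m]

def eulerTangentMatrix (a Δt : R) (J : Matrix m m R) (g b : m → R) : Matrix m m R :=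
  (1 - a * Δt) • 1 + Δt • J + vecMulVec b g

theorem eulerTangentMatrix_mulVec (a Δt : R) (J : Matrix m m R) (g b v : m → R) :
    eulerTangentMatrix a Δt J g b *ᵥ v = v - (a * Δt) • v + Δt • J *ᵥ v + (g ⬝ᵥ v) • b := by
  simp only [eulerTangentMatrix, add_mulVec, smul_mulVec, one_mulVec, vecMulVec_mulVec,
    op_smul_eq_smul, sub_smul, one_smul, sub_mulVec]

theorem eulerTangentMatrix_transpose_mulVec (a Δt : R) (J : Matrix m m R) (g b ν : m → R) :
    (eulerTangentMatrix a Δt J g b)ᵀ *ᵥ ν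
      = ν - (a * Δt) • ν + (Δt • Jᵀ + vecMulVec g b) *ᵥ ν := by
  simp only [eulerTangentMatrix, transpose_add, transpose_smul, transpose_one,
    transpose_vecMulVec, add_mulVec, smul_mulVec, one_mulVec, sub_smul, one_smul, transpose_sub,
    sub_mulVec, add_assoc]

end EulerStep

theorem adjoint_path_kernel_euler_pathwise_general
    (M N : ℕ)
    (Δt : ℝ)
    (x ΔB : ℕ → Fin M → ℝ)
    (α : ℕ → ℝ)
    (F : (Fin M → ℝ) → (Fin M → ℝ)) (σ : (Fin M → ℝ) → ℝ)
    (Φ : (Fin M → ℝ) → ℝ)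
    (Φavg : ℝ)
    (δF : ℕ → Fin M → ℝ) (δσ : ℕ → ℝ)
    (v ν : ℕ → Fin M → ℝ)
    (hv : ∀ n < N,
      v (n + 1) = v n - (α n * Δt) • v n + Δt • (jac F (x n)).mulVec (v n)
        + Δt • δF n + ((gradVec σ (x n)) ⬝ᵥ v n + δσ n) • ΔB n)
    (hνN : ν N = gradVec Φ (x N))
    (hν : ∀ k < N,
      ν k = ν (k + 1) - (α k * Δt) • ν (k + 1)
        + (Δt • (jac F (x k))ᵀ + vecMulVec (gradVec σ (x k)) (ΔB k)).mulVec (ν (k + 1))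
        + ((Φ (x N) - Φavg) * (α k / σ (x k))) • ΔB k) :
    gradVec Φ (x N) ⬝ᵥ v N
      + (Φ (x N) - Φavg) * ∑ n ∈ Finset.range N, (α n / σ (x n)) * (ΔB n ⬝ᵥ v n)
      = ν 0 ⬝ᵥ v 0
        + ∑ k ∈ Finset.range N, ν (k + 1) ⬝ᵥ (Δt • δF k + δσ k • ΔB k) := by
  have pairing := dotProduct_eq_add_sum_of_adjoint_recursions
    (fun n => eulerTangentMatrix (α n) Δt (jac F (x n)) (gradVec σ (x n)) (ΔB n))
    (fun n => Δt • δF n + δσ n • ΔB n)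
    (fun n => ((Φ (x N) - Φavg) * (α n / σ (x n))) • ΔB n) v ν N
    (fun n hn => by rw [hv n hn, eulerTangentMatrix_mulVec]; module)
    (fun n hn => by rw [hν n hn, eulerTangentMatrix_transpose_mulVec])
  rw [← hνN, pairing, Finset.sum_sub_distrib, Finset.mul_sum]
  simp only [smul_dotProduct, smul_eq_mul, mul_assoc]
  ring

/-- pathwise adjoint identity for the Euler–Maruyama
discretization.  With the damped tangent process
`v_{n+1} = v_n − α_n v_n Δt + ∇F(x_n) v_n Δt + δF_n Δt
            + (⟨∇σ(x_n), v_n⟩ + δσ_n) ΔB_n`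
and the adjoint covector process `ν_N = ∇Φ(x_N)`,
`ν_k = ν_{k+1} − α_k ν_{k+1} Δt + (∇F(x_k)ᵀ Δt + ∇σ(x_k) ΔB_kᵀ) ν_{k+1}
        + (Φ(x_N) − Φ^avg)(α_k/σ(x_k)) ΔB_k`,
one has
`⟨∇Φ(x_N), v_N⟩ + (Φ(x_N) − Φ^avg) ∑_{n<N} (α_n/σ(x_n)) ⟨ΔB_n, v_n⟩
  = ⟨ν_0, v_0⟩ + ∑_{k<N} ⟨ν_{k+1}, δF_k Δt + δσ_k ΔB_k⟩`. -/
theorem adjoint_path_kernel_euler_pathwise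
    (M N : ℕ) (hM : 1 ≤ M) (hN : 1 ≤ N)
    (Δt : ℝ) (hΔt : 0 < Δt)
    (x ΔB : ℕ → Fin M → ℝ)
    (α : ℕ → ℝ)
    (F : (Fin M → ℝ) → (Fin M → ℝ)) (σ : (Fin M → ℝ) → ℝ)
    (hF : ContDiff ℝ 1 F) (hσ : ContDiff ℝ 1 σ)
    (hσne : ∀ n < N, σ (x n) ≠ 0)
    (Φ : (Fin M → ℝ) → ℝ) (hΦ : Differentiable ℝ Φ)
    (Φavg : ℝ)
    (δF : ℕ → Fin M → ℝ) (δσ : ℕ → ℝ)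
    (v ν : ℕ → Fin M → ℝ)
    (hv : ∀ n < N,
      v (n + 1) = v n - (α n * Δt) • v n + Δt • (jac F (x n)).mulVec (v n)
        + Δt • δF n + ((gradVec σ (x n)) ⬝ᵥ v n + δσ n) • ΔB n)
    (hνN : ν N = gradVec Φ (x N))
    (hν : ∀ k < N,
      ν k = ν (k + 1) - (α k * Δt) • ν (k + 1)
        + (Δt • (jac F (x k))ᵀ + vecMulVec (gradVec σ (x k)) (ΔB k)).mulVec (ν (k + 1))
        + ((Φ (x N) - Φavg) * (α k / σ (x k))) • ΔB k) :
    gradVec Φ (x N) ⬝ᵥ v N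
      + (Φ (x N) - Φavg) * ∑ n ∈ Finset.range N, (α n / σ (x n)) * (ΔB n ⬝ᵥ v n)
      = ν 0 ⬝ᵥ v 0
        + ∑ k ∈ Finset.range N, ν (k + 1) ⬝ᵥ (Δt • δF k + δσ k • ΔB k) :=
  adjoint_path_kernel_euler_pathwise_general M N Δt x ΔB α F σ Φ Φavg δF δσ v ν hv hνN hν
end

section
/- Pathwise adjoint identity for the discretized infinite-time (ergodic) path-kernel formula: in the windowed Euler setting below, with zero initial tangent condition v_0 = 0 and zero terminal adjoint condition ν_N = 0, one has ∑_{n=0}^{N−1} ⟨ξ_n, v_n⟩ Δt = ∑_{k=0}^{N−1} ⟨ν_{k+1}, p_{k+1}⟩, where for 0 ≤ n ≤ N−1, ξ_n := ∇Φ(x_n) + (α_n / σ(x_n)) (∑_{m=1}^{N_W} (Φ(x_{n+m}) − Φ^avg)) ΔB_n and p_{n+1} := δF_n Δt + δσ_n ΔB_n. -/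
/-!
Both recursions are driven by the same one-step matrix `A_k`: the tangent process solves
`v (k+1) = A_k v k + p (k+1)` and the adjoint process solves `ν k = A_kᵀ ν (k+1) + Δt ξ k`.
Hence `⟨ν (k+1), v (k+1)⟩ - ⟨ν k, v k⟩ = ⟨ν (k+1), p (k+1)⟩ - Δt ⟨ξ k, v k⟩`, and summing over
`k < N` the left side telescopes to `⟨ν N, v N⟩ - ⟨ν 0, v 0⟩ = 0`.
-/

open Matrix

open Finset

theorem sum_dotProduct_eq_of_forward_backward {ι R : Type*} [Fintype ι] [CommRing R]
    (N : ℕ) (A : ℕ → Matrix ι ι R) (v ν p q : ℕ → ι → R)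
    (hv0 : v 0 = 0) (hv : ∀ k < N, v (k + 1) = A k *ᵥ v k + p (k + 1))
    (hνN : ν N = 0) (hν : ∀ k < N, ν k = (A k)ᵀ *ᵥ ν (k + 1) + q k) :
    ∑ k ∈ range N, q k ⬝ᵥ v k = ∑ k ∈ range N, ν (k + 1) ⬝ᵥ p (k + 1) := by
  have step : ∀ k < N, ν (k + 1) ⬝ᵥ v (k + 1) - ν k ⬝ᵥ v k
      = ν (k + 1) ⬝ᵥ p (k + 1) - q k ⬝ᵥ v k := by
    intro k hk
    rw [hv k hk, hν k hk, dotProduct_add, add_dotProduct, dotProduct_comm _ (v k),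
      dotProduct_transpose_mulVec]
    ring
  have telescope := sum_range_sub (fun k => ν k ⬝ᵥ v k) N
  rw [sum_congr rfl fun k hk => step k (mem_range.mp hk), sum_sub_distrib,
    hνN, hv0, zero_dotProduct, dotProduct_zero, sub_zero] at telescope
  exact (sub_eq_zero.mp telescope).symm

def dampedEulerMatrix {ι R : Type*} [DecidableEq ι] [CommRing R]
    (a Δt : R) (J : Matrix ι ι R) (g b : ι → R) : Matrix ι ι R :=
  1 - (a * Δt) • 1 + Δt • J + vecMulVec b g

section dampedEulerMatrix

variable {ι R : Type*} [Fintype ι] [DecidableEq ι] [CommRing R]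
  (a Δt : R) (J : Matrix ι ι R) (g b w : ι → R)

theorem dampedEulerMatrix_mulVec :
    dampedEulerMatrix a Δt J g b *ᵥ w = w - (a * Δt) • w + Δt • J *ᵥ w + (g ⬝ᵥ w) • b := by
  simp only [dampedEulerMatrix, add_mulVec, sub_mulVec, smul_mulVec, one_mulVec,
    vecMulVec_mulVec, op_smul_eq_smul]

theorem dampedEulerMatrix_transpose_mulVec :
    (dampedEulerMatrix a Δt J g b)ᵀ *ᵥ w
      = w - (a * Δt) • w + (Δt • Jᵀ + vecMulVec g b) *ᵥ w := by
  simp only [dampedEulerMatrix, transpose_add, transpose_sub, transpose_smul, transpose_one,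
    transpose_vecMulVec, add_mulVec, sub_mulVec, smul_mulVec, one_mulVec, add_assoc]

end dampedEulerMatrix

theorem adjoint_path_kernel_ergodic_pathwise_general
    (M N : ℕ)
    (Δt : ℝ)
    (x ΔB : ℕ → Fin M → ℝ)
    (α : ℕ → ℝ)
    (F : (Fin M → ℝ) → (Fin M → ℝ)) (σ : (Fin M → ℝ) → ℝ)
    (ξ p : ℕ → Fin M → ℝ)
    (v ν : ℕ → Fin M → ℝ)
    (hv0 : v 0 = 0)
    (hv : ∀ n < N,
      v (n + 1) = v n - (α n * Δt) • v n + Δt • (jac F (x n)).mulVec (v n)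
        + ((gradVec σ (x n)) ⬝ᵥ v n) • ΔB n + p (n + 1))
    (hνN : ν N = 0)
    (hν : ∀ k < N,
      ν k = ν (k + 1) - (α k * Δt) • ν (k + 1)
        + (Δt • (jac F (x k))ᵀ + vecMulVec (gradVec σ (x k)) (ΔB k)).mulVec (ν (k + 1))
        + Δt • ξ k) :
    ∑ n ∈ Finset.range N, (ξ n ⬝ᵥ v n) * Δt
      = ∑ k ∈ Finset.range N, ν (k + 1) ⬝ᵥ p (k + 1) := by
  let A n := dampedEulerMatrix (α n) Δt (jac F (x n)) (gradVec σ (x n)) (ΔB n)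
  have duality := sum_dotProduct_eq_of_forward_backward N A v ν p (fun k => Δt • ξ k) hv0
    (fun k hk => by rw [dampedEulerMatrix_mulVec, hv k hk])
    hνN (fun k hk => by rw [dampedEulerMatrix_transpose_mulVec, hν k hk])
  simpa only [smul_dotProduct, smul_eq_mul, mul_comm Δt] using duality

/-- pathwise adjoint identity for the discretized
infinite-time (ergodic) path-kernel formula.  With
`ξ_n := ∇Φ(x_n) + (α_n/σ(x_n)) (∑_{m=1}^{N_W} (Φ(x_{n+m}) − Φ^avg)) ΔB_n`,
`p_{n+1} := δF_n Δt + δσ_n ΔB_n`,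
the damped tangent process `v_0 = 0`,
`v_{n+1} = v_n − α_n v_n Δt + ∇F(x_n) v_n Δt + ⟨∇σ(x_n), v_n⟩ ΔB_n + p_{n+1}`,
and the adjoint covector process `ν_N = 0`,
`ν_k = ν_{k+1} − α_k ν_{k+1} Δt + (∇F(x_k)ᵀ Δt + ∇σ(x_k) ΔB_kᵀ) ν_{k+1} + ξ_k Δt`,
one has `∑_{n<N} ⟨ξ_n, v_n⟩ Δt = ∑_{k<N} ⟨ν_{k+1}, p_{k+1}⟩`. -/
theorem adjoint_path_kernel_ergodic_pathwise
    (M N NW : ℕ) (hM : 1 ≤ M) (hN : 1 ≤ N) (hNW : 1 ≤ NW)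
    (Δt : ℝ) (hΔt : 0 < Δt)
    (x ΔB : ℕ → Fin M → ℝ)
    (α : ℕ → ℝ)
    (F : (Fin M → ℝ) → (Fin M → ℝ)) (σ : (Fin M → ℝ) → ℝ)
    (hF : ContDiff ℝ 1 F) (hσ : ContDiff ℝ 1 σ)
    (hσne : ∀ n < N, σ (x n) ≠ 0)
    (Φ : (Fin M → ℝ) → ℝ) (hΦ : Differentiable ℝ Φ)
    (Φavg : ℝ)
    (δF : ℕ → Fin M → ℝ) (δσ : ℕ → ℝ)
    (ξ p : ℕ → Fin M → ℝ)
    (hξ : ∀ n < N,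
      ξ n = gradVec Φ (x n)
        + ((α n / σ (x n)) * ∑ m ∈ Finset.Icc 1 NW, (Φ (x (n + m)) - Φavg)) • ΔB n)
    (hp : ∀ n < N, p (n + 1) = Δt • δF n + δσ n • ΔB n)
    (v ν : ℕ → Fin M → ℝ)
    (hv0 : v 0 = 0)
    (hv : ∀ n < N,
      v (n + 1) = v n - (α n * Δt) • v n + Δt • (jac F (x n)).mulVec (v n)
        + ((gradVec σ (x n)) ⬝ᵥ v n) • ΔB n + p (n + 1))
    (hνN : ν N = 0)
    (hν : ∀ k < N,
      ν k = ν (k + 1) - (α k * Δt) • ν (k + 1)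
        + (Δt • (jac F (x k))ᵀ + vecMulVec (gradVec σ (x k)) (ΔB k)).mulVec (ν (k + 1))
        + Δt • ξ k) :
    ∑ n ∈ Finset.range N, (ξ n ⬝ᵥ v n) * Δt
      = ∑ k ∈ Finset.range N, ν (k + 1) ⬝ᵥ p (k + 1) :=
  adjoint_path_kernel_ergodic_pathwise_general M N Δt x ΔB α F σ ξ p v ν hv0 hv hνN hν
end
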